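/- Let X and Y be real Hilbert spaces and A, V : X → Y bounded linear operators. Let τ > 0 satisfy τ·‖A − V‖ < 1, where ‖A − V‖ is the operator norm. Then the bounded linear map T : X × Y → X × Y defined by T(v, w) = (v + τ·V*(w), w − τ·A(v)) is bijective. -/

import Mathlib

open scoped RealInnerProductSpace

/-!
Write `T z = z + τ K z` with `K (v, w) = (V* w, -A v)`. The `V`-part of `K` is skew-adjoint, so
`⟪T z, z⟫ = ‖z‖² - τ ⟪(A - V) v, w⟫ ≥ (1 - τ ‖A - V‖ / 2) ‖z‖²`. Hence `T` is coercive on the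
Hilbert sum `X ⊕₂ Y`, and the Lax–Milgram theorem makes it bijective.
-/

theorem ContinuousLinearMap.bijective_of_isCoercive_innerSL_comp
    {E : Type*} [NormedAddCommGroup E] [InnerProductSpace ℝ E] [CompleteSpace E]
    (T : E →L[ℝ] E) (hT : IsCoercive ((innerSL ℝ).comp T)) : Function.Bijective T := by
  have h : ⇑hT.continuousLinearEquivOfBilin = T := funext fun u =>
    ext_inner_right ℝ fun w => hT.continuousLinearEquivOfBilin_apply u w
  exact h ▸ hT.continuousLinearEquivOfBilin.bijective

namespace PDDR

variable {X Y : Type*} [NormedAddCommGroup X] [InnerProductSpace ℝ X] [CompleteSpace X]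
  [NormedAddCommGroup Y] [InnerProductSpace ℝ Y] [CompleteSpace Y]

open ContinuousLinearMap in
/-- The map of the theorem, transported to `WithLp 2 (X × Y)`: the product `X × Y` itself carries
the sup norm and no inner product. -/
noncomputable def systemOp (A V : X →L[ℝ] Y) (τ : ℝ) :
    WithLp 2 (X × Y) →L[ℝ] WithLp 2 (X × Y) :=
  (WithLp.prodContinuousLinearEquiv 2 ℝ X Y).symm ∘L
    ((fst ℝ X Y + τ • adjoint V ∘L snd ℝ X Y).prod (snd ℝ X Y - τ • A ∘L fst ℝ X Y)) ∘L
    (WithLp.prodContinuousLinearEquiv 2 ℝ X Y : WithLp 2 (X × Y) →L[ℝ] X × Y)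

theorem inner_systemOp_self (A V : X →L[ℝ] Y) (τ : ℝ) (z : WithLp 2 (X × Y)) :
    ⟪systemOp A V τ z, z⟫ = ‖z.fst‖ ^ 2 + ‖z.snd‖ ^ 2 - τ * ⟪(A - V) z.fst, z.snd⟫ := by
  rw [WithLp.prod_inner_apply]
  change ⟪z.fst + τ • ContinuousLinearMap.adjoint V z.snd, z.fst⟫
    + ⟪z.snd - τ • A z.fst, z.snd⟫ = _
  rw [inner_add_left, inner_sub_left, real_inner_smul_left, real_inner_smul_left,
    ContinuousLinearMap.adjoint_inner_left, real_inner_self_eq_norm_sq,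
    real_inner_self_eq_norm_sq, real_inner_comm (V z.fst), sub_apply,
    inner_sub_left]
  ring

theorem isCoercive_systemOp (A V : X →L[ℝ] Y) {τ : ℝ} (hτ : 0 ≤ τ) (hsmall : τ * ‖A - V‖ < 2) :
    IsCoercive ((innerSL ℝ).comp (systemOp A V τ)) := by
  refine ⟨1 - τ * ‖A - V‖ / 2, by linarith, fun z => ?_⟩
  have hcross : ⟪(A - V) z.fst, z.snd⟫ ≤ ‖A - V‖ * ((‖z.fst‖ ^ 2 + ‖z.snd‖ ^ 2) / 2) :=
    calc ⟪(A - V) z.fst, z.snd⟫ ≤ ‖(A - V) z.fst‖ * ‖z.snd‖ := real_inner_le_norm _ _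
      _ ≤ ‖A - V‖ * ‖z.fst‖ * ‖z.snd‖ := by gcongr; exact (A - V).le_opNorm _
      _ ≤ ‖A - V‖ * ((‖z.fst‖ ^ 2 + ‖z.snd‖ ^ 2) / 2) := by
        rw [mul_assoc]
        gcongr
        linarith [two_mul_le_add_sq ‖z.fst‖ ‖z.snd‖]
  rw [ContinuousLinearMap.comp_apply, innerSL_apply_apply, inner_systemOp_self, mul_assoc, ← sq,
    z.prod_norm_sq_eq_of_L2]
  nlinarith [mul_le_mul_of_nonneg_left hcross hτ]

end PDDR

theorem pddr_linear_system_bijective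
    {X Y : Type*} [NormedAddCommGroup X] [InnerProductSpace ℝ X] [CompleteSpace X]
    [NormedAddCommGroup Y] [InnerProductSpace ℝ Y] [CompleteSpace Y]
    (A V : X →L[ℝ] Y) (τ : ℝ) (hτ : 0 < τ) (hsmall : τ * ‖A - V‖ < 1) :
    Function.Bijective (fun vw : X × Y =>
      (vw.1 + τ • (ContinuousLinearMap.adjoint V) vw.2, vw.2 - τ • A vw.1)) := by
  have hT : Function.Bijective (PDDR.systemOp A V τ) :=
    (PDDR.systemOp A V τ).bijective_of_isCoercive_innerSL_comp
      (PDDR.isCoercive_systemOp A V hτ.le (by linarith))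
  let e := WithLp.prodContinuousLinearEquiv 2 ℝ X Y
  exact e.bijective.comp (hT.comp e.symm.bijective)
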